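/- arXiv:2603.14812 — 3 statements merged into one kernel-verified Lean document; each statement's English description precedes it below -/
import Mathlib

section
/- Suppose R > 0, Rs > 0, F > 0, Rs ≤ R < Rs/ζ and F/ρ < (R−Rs)/(1−ζ). Then η* = F/(F(1−ζ)+ρRs) simultaneously minimizes latency and storage: for every η ∈ [0,1], T(R,Rs,F,η*) ≤ T(R,Rs,F,η) and V(R,Rs,F,η*) ≤ V(R,Rs,F,η); moreover T(R,Rs,F,η*) = Dρ/(F(1−ζ)+ρRs) and V(R,Rs,F,η*) = D(R − Rs − (1−ζ)F/ρ)/R. -/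
/-!
Under the hypotheses case (v) is empty, case (iii) lies to the right of `η*` and case (iv) to
its left, so on `[0, 1]` the latency is `D · max (ηρ/F) ((ζη+1−η)/Rs)`: the maximum of an
increasing and a decreasing function of `η`, minimised where the two cross, which is at `η*`.
The storage is at least `D(R − Rs − (1−ζ)F/ρ)/R` in every case, and `η*` falls in cases
(i)/(ii), where this bound is attained.
-/

noncomputable section

/-- Upload latency `T(R,Rs,F,η)`, defined piecewise (cases (i)-(v)). -/
def Tlat (D ρ ζ R Rs F η : ℝ) : ℝ :=
  if F / ρ ≤ η * R then
    if Rs ≤ ζ * F / ρ + (1 - η) * R then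
      if η * Rs / (ζ * η + 1 - η) ≤ F / ρ then
        D * (ζ * η + 1 - η) / Rs            -- case (i)
      else
        η * D * ρ / F                        -- case (ii)
    else
      η * D * ρ / F                          -- case (iii)
  else
    if Rs ≤ (ζ * η + 1 - η) * R then
      D * (ζ * η + 1 - η) / Rs               -- case (iv)
    else
      D / R                                  -- case (v)

/-- Required storage `V(R,Rs,F,η)`, defined piecewise (cases (i)-(v)). -/
def Vsto (D ρ ζ R Rs F η : ℝ) : ℝ :=
  if F / ρ ≤ η * R then
    if Rs ≤ ζ * F / ρ + (1 - η) * R then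
      D * (R - Rs - (1 - ζ) * F / ρ) / R     -- cases (i),(ii)
    else
      D * (η * R - F / ρ) / R                -- case (iii)
  else
    if Rs ≤ (ζ * η + 1 - η) * R then
      D * ((ζ * η + 1 - η) * R - Rs) / R     -- case (iv)
    else
      0                                      -- case (v)

/-- `η*` balances the computing time `ηDρ/F` against the transmission time `D(ζη+1−η)/Rs`. -/
def etaStar (ρ ζ Rs F : ℝ) : ℝ := F / (F * (1 - ζ) + ρ * Rs)

variable {D ρ ζ R Rs F η : ℝ}

theorem Vsto_ge (hD : 0 ≤ D) (hR : 0 ≤ R) (hζ : ζ ≤ 1) (η : ℝ) :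
    D * (R - Rs - (1 - ζ) * F / ρ) / R ≤ Vsto D ρ ζ R Rs F η := by
  unfold Vsto
  split_ifs with hcomp hlink hlink
  · rfl
  · gcongr D * ?_ / R
    linear_combination not_le.1 hlink
  all_goals
    have hgap : (1 - ζ) * (η * R) ≤ (1 - ζ) * (F / ρ) :=
      mul_le_mul_of_nonneg_left (not_le.1 hcomp).le (sub_nonneg.2 hζ)
  · gcongr D * ?_ / R
    linear_combination hgap
  · refine div_nonpos_of_nonpos_of_nonneg (mul_nonpos_of_nonneg_of_nonpos hD ?_) hR
    linear_combination hgap + not_le.1 hlink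

theorem denom_etaStar_pos (hρ : 0 < ρ) (hF : 0 < F) (hRs : 0 < Rs) (hζ : ζ ≤ 1) :
    0 < F * (1 - ζ) + ρ * Rs :=
  add_pos_of_nonneg_of_pos (mul_nonneg hF.le (sub_nonneg.2 hζ)) (mul_pos hρ hRs)

theorem etaStar_le_iff (hρ : 0 < ρ) (hF : 0 < F) (hRs : 0 < Rs) (hζ : ζ ≤ 1) :
    etaStar ρ ζ Rs F ≤ η ↔ (ζ * η + 1 - η) / Rs ≤ η * ρ / F := by
  rw [etaStar, div_le_iff₀ (denom_etaStar_pos hρ hF hRs hζ), div_le_div_iff₀ hRs hF]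
  constructor <;> intro h <;> linarith

theorem etaStar_mul_div (hF : 0 < F) :
    etaStar ρ ζ Rs F * ρ / F = ρ / (F * (1 - ζ) + ρ * Rs) := by
  rw [etaStar]
  field_simp

theorem sub_etaStar_div (hρ : 0 < ρ) (hF : 0 < F) (hRs : 0 < Rs) (hζ : ζ ≤ 1) :
    (ζ * etaStar ρ ζ Rs F + 1 - etaStar ρ ζ Rs F) / Rs = ρ / (F * (1 - ζ) + ρ * Rs) := by
  have := denom_etaStar_pos hρ hF hRs hζ
  rw [etaStar]
  field_simp
  ring

theorem lt_etaStar_iff (hρ : 0 < ρ) (hF : 0 < F) (hRs : 0 < Rs) (hζ : ζ ≤ 1) :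
    η < etaStar ρ ζ Rs F ↔ η * ρ / F < (ζ * η + 1 - η) / Rs := by
  rw [← not_le, etaStar_le_iff hρ hF hRs hζ, not_le]

theorem etaStar_mem_Icc (hρ : 0 < ρ) (hF : 0 < F) (hRs : 0 < Rs) (hζ : ζ ≤ 1)
    (hsat : ζ * F < ρ * Rs) : etaStar ρ ζ Rs F ∈ Set.Icc 0 1 := by
  have hA := denom_etaStar_pos hρ hF hRs hζ
  refine ⟨div_nonneg hF.le hA.le, (div_le_one hA).2 ?_⟩
  linarith

theorem etaStar_lt_of_inflow_lt (hρ : 0 < ρ) (hF : 0 < F) (hRs : 0 < Rs) (hζ : ζ ≤ 1)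
    (hsat : ζ * F < ρ * Rs) (hcap : F * (1 - ζ) + ρ * Rs < ρ * R)
    (hinflow : ζ * F / ρ + (1 - η) * R < Rs) : etaStar ρ ζ Rs F < η := by
  have hA := denom_etaStar_pos hρ hF hRs hζ
  have hinflow' : ρ * (R - Rs) + ζ * F < η * R * ρ := by
    rw [div_add' _ _ _ hρ.ne', div_lt_iff₀ hρ] at hinflow
    linear_combination hinflow
  -- the two sides differ by `(ρRs - ζF)(ρR - F(1-ζ) - ρRs)`
  have hkey : F * (ρ * R) < (ρ * (R - Rs) + ζ * F) * (F * (1 - ζ) + ρ * Rs) := by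
    linear_combination mul_pos (sub_pos.2 hsat) (sub_pos.2 hcap)
  have : F * (ρ * R) < η * (F * (1 - ζ) + ρ * Rs) * (ρ * R) := by
    linear_combination hkey + mul_lt_mul_of_pos_right hinflow' hA
  rw [etaStar, div_lt_iff₀ hA]
  exact lt_of_mul_lt_mul_right this (by linarith)

theorem lt_etaStar_of_mul_lt (hρ : 0 < ρ) (hF : 0 < F) (hRs : 0 < Rs) (hζ : ζ ≤ 1)
    (hcap : F * (1 - ζ) + ρ * Rs < ρ * R) (hη : 0 ≤ η) (hcomp : η * R < F / ρ) :
    η < etaStar ρ ζ Rs F := by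
  have hA := denom_etaStar_pos hρ hF hRs hζ
  rw [lt_div_iff₀ hρ] at hcomp
  rw [etaStar, lt_div_iff₀ hA]
  linear_combination hcomp + mul_le_mul_of_nonneg_left hcap.le hη

theorem lt_mul_of_mul_lt_div (hρ : 0 < ρ) (hζ : ζ ≤ 1) (hcap : F * (1 - ζ) + ρ * Rs < ρ * R)
    (hcomp : η * R < F / ρ) : Rs < (ζ * η + 1 - η) * R := by
  rw [lt_div_iff₀ hρ] at hcomp
  refine lt_of_mul_lt_mul_left ?_ hρ.le
  linear_combination hcap + mul_le_mul_of_nonneg_left hcomp.le (sub_nonneg.2 hζ)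

theorem Tlat_eq_max (hρ : 0 < ρ) (hF : 0 < F) (hRs : 0 < Rs) (hζ₀ : 0 < ζ) (hζ₁ : ζ ≤ 1)
    (hsat : ζ * F < ρ * Rs) (hcap : F * (1 - ζ) + ρ * Rs < ρ * R) (hη : η ∈ Set.Icc 0 1) :
    Tlat D ρ ζ R Rs F η = D * max (η * ρ / F) ((ζ * η + 1 - η) / Rs) := by
  have hs : 0 < ζ * η + 1 - η := by nlinarith [hη.1, hη.2]
  unfold Tlat
  split_ifs with hcomp hinflow hbal hinflow
  · rw [div_le_div_iff₀ hs hρ] at hbal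
    rw [max_eq_right ((div_le_div_iff₀ hF hRs).2 (by linear_combination hbal)), mul_div_assoc]
  · rw [div_le_div_iff₀ hs hρ, not_le] at hbal
    rw [max_eq_left ((div_le_div_iff₀ hRs hF).2 (by linear_combination hbal.le))]
    ring
  · have := etaStar_lt_of_inflow_lt hρ hF hRs hζ₁ hsat hcap (not_le.1 hinflow)
    rw [max_eq_left ((etaStar_le_iff hρ hF hRs hζ₁).1 this.le)]
    ring
  · have := lt_etaStar_of_mul_lt hρ hF hRs hζ₁ hcap hη.1 (not_le.1 hcomp)
    rw [max_eq_right ((lt_etaStar_iff hρ hF hRs hζ₁).1 this).le, mul_div_assoc]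
  · exact absurd (lt_mul_of_mul_lt_div hρ hζ₁ hcap (not_le.1 hcomp)).le hinflow

theorem Tlat_etaStar (hρ : 0 < ρ) (hF : 0 < F) (hRs : 0 < Rs) (hζ₀ : 0 < ζ) (hζ₁ : ζ ≤ 1)
    (hsat : ζ * F < ρ * Rs) (hcap : F * (1 - ζ) + ρ * Rs < ρ * R) :
    Tlat D ρ ζ R Rs F (etaStar ρ ζ Rs F) = D * ρ / (F * (1 - ζ) + ρ * Rs) := by
  rw [Tlat_eq_max hρ hF hRs hζ₀ hζ₁ hsat hcap (etaStar_mem_Icc hρ hF hRs hζ₁ hsat),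
    etaStar_mul_div hF, sub_etaStar_div hρ hF hRs hζ₁, max_self, mul_div_assoc]

theorem Tlat_etaStar_le (hρ : 0 < ρ) (hF : 0 < F) (hRs : 0 < Rs) (hζ₀ : 0 < ζ) (hζ₁ : ζ ≤ 1)
    (hsat : ζ * F < ρ * Rs) (hcap : F * (1 - ζ) + ρ * Rs < ρ * R) (hD : 0 ≤ D)
    (hη : η ∈ Set.Icc 0 1) :
    Tlat D ρ ζ R Rs F (etaStar ρ ζ Rs F) ≤ Tlat D ρ ζ R Rs F η := by
  rw [Tlat_etaStar hρ hF hRs hζ₀ hζ₁ hsat hcap, Tlat_eq_max hρ hF hRs hζ₀ hζ₁ hsat hcap hη,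
    mul_div_assoc]
  gcongr
  rcases le_total (etaStar ρ ζ Rs F) η with h | h
  · rw [← etaStar_mul_div hF]
    exact le_max_of_le_left (by gcongr)
  · rw [← sub_etaStar_div hρ hF hRs hζ₁]
    refine le_max_of_le_right (div_le_div_of_nonneg_right ?_ hRs.le)
    linear_combination mul_le_mul_of_nonneg_left h (sub_nonneg.2 hζ₁)

theorem Vsto_etaStar (hρ : 0 < ρ) (hF : 0 < F) (hRs : 0 < Rs) (hζ : ζ ≤ 1)
    (hsat : ζ * F < ρ * Rs) (hcap : F * (1 - ζ) + ρ * Rs < ρ * R) :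
    Vsto D ρ ζ R Rs F (etaStar ρ ζ Rs F) = D * (R - Rs - (1 - ζ) * F / ρ) / R := by
  have hcomp : F / ρ ≤ etaStar ρ ζ Rs F * R := not_lt.1 fun h =>
    (lt_etaStar_of_mul_lt hρ hF hRs hζ hcap (etaStar_mem_Icc hρ hF hRs hζ hsat).1 h).false
  have hinflow : Rs ≤ ζ * F / ρ + (1 - etaStar ρ ζ Rs F) * R := not_lt.1 fun h =>
    (etaStar_lt_of_inflow_lt hρ hF hRs hζ hsat hcap h).false
  simp only [Vsto, if_pos hcomp, if_pos hinflow]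

theorem eta_opt_case2_general
    (D ρ ζ : ℝ) (hD : 0 < D) (hρ : 0 < ρ) (hζ : ζ ∈ Set.Ioo (0:ℝ) 1)
    (R Rs F : ℝ) (hR : 0 < R) (hRs : 0 < Rs) (hF : 0 < F)
    (h2 : R < Rs / ζ) (h3 : F / ρ < (R - Rs) / (1 - ζ)) :
    (∀ η ∈ Set.Icc (0:ℝ) 1,
      Tlat D ρ ζ R Rs F (F / (F * (1 - ζ) + ρ * Rs)) ≤ Tlat D ρ ζ R Rs F η ∧
      Vsto D ρ ζ R Rs F (F / (F * (1 - ζ) + ρ * Rs)) ≤ Vsto D ρ ζ R Rs F η) ∧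
    Tlat D ρ ζ R Rs F (F / (F * (1 - ζ) + ρ * Rs)) = D * ρ / (F * (1 - ζ) + ρ * Rs) ∧
    Vsto D ρ ζ R Rs F (F / (F * (1 - ζ) + ρ * Rs)) = D * (R - Rs - (1 - ζ) * F / ρ) / R := by
  obtain ⟨hζ₀, hζ₁⟩ := hζ
  have hcap : F * (1 - ζ) + ρ * Rs < ρ * R := by
    rw [div_lt_div_iff₀ hρ (sub_pos.2 hζ₁)] at h3
    linarith
  have hsat : ζ * F < ρ * Rs := by
    rw [lt_div_iff₀ hζ₀] at h2
    nlinarith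
  have hV := Vsto_etaStar (D := D) hρ hF hRs hζ₁.le hsat hcap
  refine ⟨fun η hη => ⟨Tlat_etaStar_le hρ hF hRs hζ₀ hζ₁.le hsat hcap hD.le hη, ?_⟩,
    Tlat_etaStar hρ hF hRs hζ₀ hζ₁.le hsat hcap, hV⟩
  exact hV ▸ Vsto_ge hD.le hR.le hζ₁.le η

/-- If `Rs ≤ R < Rs/ζ` and `F/ρ < (R−Rs)/(1−ζ)`, then `η* = F/(F(1−ζ)+ρRs)` simultaneously
minimizes latency and storage, with `T = Dρ/(F(1−ζ)+ρRs)` and `V = D(R−Rs−(1−ζ)F/ρ)/R`. -/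
theorem eta_opt_case2
    (D ρ ζ : ℝ) (hD : 0 < D) (hρ : 0 < ρ) (hζ : ζ ∈ Set.Ioo (0:ℝ) 1)
    (R Rs F : ℝ) (hR : 0 < R) (hRs : 0 < Rs) (hF : 0 < F)
    (h1 : Rs ≤ R) (h2 : R < Rs / ζ) (h3 : F / ρ < (R - Rs) / (1 - ζ)) :
    (∀ η ∈ Set.Icc (0:ℝ) 1,
      Tlat D ρ ζ R Rs F (F / (F * (1 - ζ) + ρ * Rs)) ≤ Tlat D ρ ζ R Rs F η ∧
      Vsto D ρ ζ R Rs F (F / (F * (1 - ζ) + ρ * Rs)) ≤ Vsto D ρ ζ R Rs F η) ∧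
    Tlat D ρ ζ R Rs F (F / (F * (1 - ζ) + ρ * Rs)) = D * ρ / (F * (1 - ζ) + ρ * Rs) ∧
    Vsto D ρ ζ R Rs F (F / (F * (1 - ζ) + ρ * Rs)) = D * (R - Rs - (1 - ζ) * F / ρ) / R :=
  eta_opt_case2_general D ρ ζ hD hρ hζ R Rs F hR hRs hF h2 h3

end
end

section
/- Suppose R > 0, Rs > 0, F > 0, Rs ≤ R < Rs/ζ and F/ρ ≥ (R−Rs)/(1−ζ). Then η* = (R−Rs)/((1−ζ)R) simultaneously minimizes latency and storage: for every η ∈ [0,1], T(R,Rs,F,η*) ≤ T(R,Rs,F,η) and V(R,Rs,F,η*) ≤ V(R,Rs,F,η); moreover T(R,Rs,F,η*) = D/R and V(R,Rs,F,η*) = 0. -/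
/-!
Whatever route the data takes, it cannot leave the user faster than the user-to-hub rate `R`,
so `T ≥ D/R`, and the storage `V` is never negative. The routing fraction `η*` is exactly the one
for which the traffic arriving at the hub, `(ζη + 1 - η)R`, equals the hub-to-satellite rate `Rs`,
while the computing load `η*R = (R - Rs)/(1 - ζ)` stays within the CPU capacity `F/ρ`; at such a
balanced fraction nothing queues at the hub, so both bounds are attained.
-/

noncomputable section

section

variable {D ρ ζ R Rs F η : ℝ}

theorem div_le_Tlat (hD : 0 ≤ D) (hρ : 0 < ρ) (hζ : 0 ≤ ζ) (hR : 0 < R) (hRs : 0 < Rs)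
    (hF : 0 < F) : D / R ≤ Tlat D ρ ζ R Rs F η := by
  have of_forwarded_le {k : ℝ} (hk : Rs ≤ k * R) : D / R ≤ D * k / Rs := by
    rw [div_le_div_iff₀ hR hRs]
    nlinarith [mul_le_mul_of_nonneg_left hk hD]
  have of_load_ge (hload : F / ρ ≤ η * R) : D / R ≤ η * D * ρ / F := by
    rw [div_le_iff₀ hρ] at hload
    rw [div_le_div_iff₀ hR hF]
    nlinarith [mul_le_mul_of_nonneg_left hload hD]
  unfold Tlat
  split_ifs with hload hout hcpu hfwd
  · refine of_forwarded_le ?_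
    rw [mul_div_assoc] at hout
    nlinarith [mul_le_mul_of_nonneg_left hload hζ]
  · exact of_load_ge hload
  · exact of_load_ge hload
  · exact of_forwarded_le hfwd
  · exact le_rfl

theorem Vsto_nonneg (hD : 0 ≤ D) (hR : 0 ≤ R) : 0 ≤ Vsto D ρ ζ R Rs F η := by
  have of_nonneg {x : ℝ} (hx : 0 ≤ x) : 0 ≤ D * x / R := div_nonneg (mul_nonneg hD hx) hR
  unfold Vsto
  split_ifs with hload hout hout
  · refine of_nonneg ?_
    rw [mul_div_assoc] at hout ⊢
    linarith
  · exact of_nonneg (by linarith)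
  · exact of_nonneg (by linarith)
  · exact le_rfl

theorem Tlat_eq_of_balanced (hflow : (ζ * η + 1 - η) * R = Rs) (hload : η * R ≤ F / ρ)
    (hR : R ≠ 0) (hRs : Rs ≠ 0) : Tlat D ρ ζ R Rs F η = D / R := by
  have hk : ζ * η + 1 - η ≠ 0 := by
    rintro hk
    rw [hk, zero_mul] at hflow
    exact hRs hflow.symm
  have hforward : D * (ζ * η + 1 - η) / Rs = D / R := by
    rw [← hflow]
    field_simp
  unfold Tlat
  split_ifs with hload' hout hcpu
  · exact hforward
  · have hq : F / ρ = η * R := le_antisymm hload' hload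
    refine absurd (le_of_eq ?_) hcpu
    rw [hq, ← hflow, mul_comm _ R, ← mul_assoc, mul_div_cancel_right₀ _ hk]
  · have hq : F / ρ = η * R := le_antisymm hload' hload
    refine absurd (le_of_eq ?_) hout
    rw [mul_div_assoc, hq, ← hflow]
    ring
  · exact hforward
  · rfl

theorem Vsto_eq_zero_of_balanced (hflow : (ζ * η + 1 - η) * R = Rs) (hload : η * R ≤ F / ρ) :
    Vsto D ρ ζ R Rs F η = 0 := by
  unfold Vsto
  split_ifs with hload'
  · have hq : F / ρ = η * R := le_antisymm hload' hload
    rw [mul_div_assoc (1 - ζ), hq, ← hflow]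
    ring
  · rw [le_antisymm hload' hload, sub_self, mul_zero, zero_div]
  · rw [hflow, sub_self, mul_zero, zero_div]
  · rfl

theorem inflow_at_eta_star (hζ : ζ ≠ 1) (hR : R ≠ 0) :
    (ζ * ((R - Rs) / ((1 - ζ) * R)) + 1 - (R - Rs) / ((1 - ζ) * R)) * R = Rs := by
  have : 1 - ζ ≠ 0 := sub_ne_zero.mpr hζ.symm
  field_simp
  ring

theorem eta_star_mul (hR : R ≠ 0) :
    (R - Rs) / ((1 - ζ) * R) * R = (R - Rs) / (1 - ζ) := by
  rw [div_mul_eq_mul_div, mul_comm (1 - ζ), ← div_div, mul_div_cancel_right₀ _ hR]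

end

theorem eta_opt_case3_general
    (D ρ ζ : ℝ) (hD : 0 < D) (hρ : 0 < ρ) (hζ : ζ ∈ Set.Ioo (0:ℝ) 1)
    (R Rs F : ℝ) (hR : 0 < R) (hRs : 0 < Rs) (hF : 0 < F)
    (h3 : (R - Rs) / (1 - ζ) ≤ F / ρ) :
    (∀ η ∈ Set.Icc (0:ℝ) 1,
      Tlat D ρ ζ R Rs F ((R - Rs) / ((1 - ζ) * R)) ≤ Tlat D ρ ζ R Rs F η ∧
      Vsto D ρ ζ R Rs F ((R - Rs) / ((1 - ζ) * R)) ≤ Vsto D ρ ζ R Rs F η) ∧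
    Tlat D ρ ζ R Rs F ((R - Rs) / ((1 - ζ) * R)) = D / R ∧
    Vsto D ρ ζ R Rs F ((R - Rs) / ((1 - ζ) * R)) = 0 := by
  obtain ⟨hζ0, hζ1⟩ := hζ
  have hflow := inflow_at_eta_star (Rs := Rs) hζ1.ne hR.ne'
  have hload := (eta_star_mul (Rs := Rs) (ζ := ζ) hR.ne').trans_le h3
  have hT := Tlat_eq_of_balanced (D := D) hflow hload hR.ne' hRs.ne'
  have hV := Vsto_eq_zero_of_balanced (D := D) hflow hload
  refine ⟨fun η _ => ⟨?_, ?_⟩, hT, hV⟩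
  · rw [hT]
    exact div_le_Tlat hD.le hρ hζ0.le hR hRs hF
  · rw [hV]
    exact Vsto_nonneg hD.le hR.le

/-- If `Rs ≤ R < Rs/ζ` and `F/ρ ≥ (R−Rs)/(1−ζ)`, then `η* = (R−Rs)/((1−ζ)R)` simultaneously
minimizes latency and storage, with `T = D/R` and `V = 0`. -/
theorem eta_opt_case3
    (D ρ ζ : ℝ) (hD : 0 < D) (hρ : 0 < ρ) (hζ : ζ ∈ Set.Ioo (0:ℝ) 1)
    (R Rs F : ℝ) (hR : 0 < R) (hRs : 0 < Rs) (hF : 0 < F)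
    (h1 : Rs ≤ R) (h2 : R < Rs / ζ) (h3 : (R - Rs) / (1 - ζ) ≤ F / ρ) :
    (∀ η ∈ Set.Icc (0:ℝ) 1,
      Tlat D ρ ζ R Rs F ((R - Rs) / ((1 - ζ) * R)) ≤ Tlat D ρ ζ R Rs F η ∧
      Vsto D ρ ζ R Rs F ((R - Rs) / ((1 - ζ) * R)) ≤ Vsto D ρ ζ R Rs F η) ∧
    Tlat D ρ ζ R Rs F ((R - Rs) / ((1 - ζ) * R)) = D / R ∧
    Vsto D ρ ζ R Rs F ((R - Rs) / ((1 - ζ) * R)) = 0 :=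
  eta_opt_case3_general D ρ ζ hD hρ hζ R Rs F hR hRs hF h3
end
end

section
/- Suppose R > 0, Rs > 0, F > 0, R ≥ Rs/ζ and F/ρ < Rs/ζ. Then η* = F/(F(1−ζ)+ρRs) simultaneously minimizes latency and storage: for every η ∈ [0,1], T(R,Rs,F,η*) ≤ T(R,Rs,F,η) and V(R,Rs,F,η*) ≤ V(R,Rs,F,η); moreover T(R,Rs,F,η*) = Dρ/(F(1−ζ)+ρRs) and V(R,Rs,F,η*) = D(R − Rs − (1−ζ)F/ρ)/R. -/
noncomputable section

/-! At `η* = F / K`, `K = F(1-ζ) + ρRs`, the computing time `η D ρ / F` and the transmission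
time `D (ζη + 1 - η) / Rs` of the processed and raw data coincide. The first increases and the
second decreases in `η`; every branch of `T` is one of the two, and its branch condition puts `η`
on the side of `η*` where that time is at least `D ρ / K`. The regime `ζF < ρRs`,
`Rs ≤ ζR` makes `K < ρR`, which rules out case (v) and puts `η*` in cases (i)/(ii), where the
storage `D (R - Rs - (1-ζ)F/ρ) / R` is the least of all five branches. -/

def etaOpt (ρ ζ Rs F : ℝ) : ℝ := F / (F * (1 - ζ) + ρ * Rs)

section

variable {D ρ ζ R Rs F η : ℝ}

local notation "K" => F * (1 - ζ) + ρ * Rs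

lemma denom_lt_of_regime (hρ : 0 < ρ) (hζ : ζ ∈ Set.Ioo (0 : ℝ) 1)
    (hζF : ζ * F < ρ * Rs) (hRsζ : Rs ≤ ζ * R) : K < ρ * R := by
  obtain ⟨hζ0, hζ1⟩ := hζ
  have hFR : F < ρ * R := by nlinarith
  nlinarith

lemma uploadFrac_etaOpt (hK : K ≠ 0) :
    ζ * etaOpt ρ ζ Rs F + 1 - etaOpt ρ ζ Rs F = ρ * Rs / K := by
  unfold etaOpt
  field_simp
  ring

lemma uploadFrac_pos (hζ : ζ ∈ Set.Ioo (0 : ℝ) 1) (hη : η ≤ 1) : 0 < ζ * η + 1 - η := by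
  nlinarith [mul_nonneg (sub_nonneg.2 hη) (sub_nonneg.2 hζ.2.le), hζ.1]

lemma div_uploadFrac_le_iff (hρ : 0 < ρ) (hs : 0 < ζ * η + 1 - η) :
    η * Rs / (ζ * η + 1 - η) ≤ F / ρ ↔ η * K ≤ F := by
  rw [div_le_div_iff₀ hs hρ]
  constructor <;> intro h <;> linarith

lemma mul_denom_lt_of_lt_div (hρ : 0 < ρ) (hη : 0 ≤ η) (hKR : K ≤ ρ * R)
    (h : η * R < F / ρ) : η * K < F := by
  rw [lt_div_iff₀ hρ] at h
  nlinarith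

lemma le_mul_denom_of_lt (hρ : 0 < ρ) (hη : η ≤ 1) (hKR : K ≤ ρ * R)
    (h : ζ * F / ρ + (1 - η) * R < Rs) : F ≤ η * K := by
  have h' : ζ * F + ρ * ((1 - η) * R) < ρ * Rs := by
    rw [div_add' _ _ _ hρ.ne', div_lt_iff₀ hρ] at h
    linarith
  nlinarith [mul_le_mul_of_nonneg_left hKR (sub_nonneg.2 hη)]

lemma le_uploadFrac_mul_denom (hζ : ζ ≤ 1) (h : η * K ≤ F) :
    ρ * Rs ≤ (ζ * η + 1 - η) * K := by
  nlinarith [mul_nonneg (sub_nonneg.2 hζ) (sub_nonneg.2 h)]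

lemma not_case_v (hρ : 0 < ρ) (hζ : ζ ∈ Set.Ioo (0 : ℝ) 1) (hKR : K ≤ ρ * R)
    (hη : η ∈ Set.Icc (0 : ℝ) 1) : ¬(η * R < F / ρ ∧ (ζ * η + 1 - η) * R < Rs) := by
  rintro ⟨hcompute, hupload⟩
  have hs := uploadFrac_pos hζ hη.2
  have := le_uploadFrac_mul_denom hζ.2.le (mul_denom_lt_of_lt_div hρ hη.1 hKR hcompute).le
  nlinarith [mul_le_mul_of_nonneg_left hKR hs.le]

lemma div_denom_le_uploadTime (hD : 0 ≤ D) (hRs : 0 < Rs) (hK : 0 < K) (hζ : ζ ≤ 1)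
    (h : η * K ≤ F) : D * ρ / K ≤ D * (ζ * η + 1 - η) / Rs := by
  rw [div_le_div_iff₀ hK hRs]
  nlinarith [mul_le_mul_of_nonneg_left (le_uploadFrac_mul_denom hζ h) hD]

lemma div_denom_le_computeTime (hD : 0 ≤ D) (hρ : 0 < ρ) (hF : 0 < F) (hK : 0 < K)
    (h : F ≤ η * K) : D * ρ / K ≤ η * D * ρ / F := by
  rw [div_le_div_iff₀ hK hF]
  nlinarith [mul_le_mul_of_nonneg_left h (mul_nonneg hD hρ.le)]

lemma div_le_etaOpt_mul (hρ : 0 < ρ) (hF : 0 ≤ F) (hK : 0 < K) (hKR : K ≤ ρ * R) :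
    F / ρ ≤ etaOpt ρ ζ Rs F * R := by
  rw [etaOpt, div_mul_eq_mul_div, div_le_div_iff₀ hρ hK]
  nlinarith [mul_le_mul_of_nonneg_left hKR hF]

lemma le_div_add_one_sub_etaOpt_mul (hρ : 0 < ρ) (hK : 0 < K) (hKR : K ≤ ρ * R)
    (hζF : ζ * F ≤ ρ * Rs) : Rs ≤ ζ * F / ρ + (1 - etaOpt ρ ζ Rs F) * R := by
  rw [etaOpt, one_sub_div hK.ne', div_mul_eq_mul_div, div_add_div _ _ hρ.ne' hK.ne',
    le_div_iff₀ (by positivity)]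
  nlinarith [mul_le_mul_of_nonneg_left hKR (sub_nonneg.2 hζF)]

lemma Tlat_etaOpt (hρ : 0 < ρ) (hζ : ζ ∈ Set.Ioo (0 : ℝ) 1) (hRs : 0 < Rs) (hF : 0 < F)
    (hζF : ζ * F < ρ * Rs) (hRsζ : Rs ≤ ζ * R) :
    Tlat D ρ ζ R Rs F (etaOpt ρ ζ Rs F) = D * ρ / K := by
  have hK : 0 < K := by nlinarith [hζ.2]
  have hKR := (denom_lt_of_regime hρ hζ hζF hRsζ).le
  have hs := uploadFrac_etaOpt hK.ne'
  have hbalance : etaOpt ρ ζ Rs F * Rs / (ζ * etaOpt ρ ζ Rs F + 1 - etaOpt ρ ζ Rs F) ≤ F / ρ :=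
    (div_uploadFrac_le_iff hρ (hs ▸ by positivity)).2 (div_mul_cancel₀ F hK.ne').le
  rw [Tlat, if_pos (div_le_etaOpt_mul hρ hF.le hK hKR),
    if_pos (le_div_add_one_sub_etaOpt_mul hρ hK hKR hζF.le), if_pos hbalance, hs]
  field_simp

lemma Vsto_etaOpt (hρ : 0 < ρ) (hζ : ζ ∈ Set.Ioo (0 : ℝ) 1) (hF : 0 < F)
    (hζF : ζ * F < ρ * Rs) (hRsζ : Rs ≤ ζ * R) :
    Vsto D ρ ζ R Rs F (etaOpt ρ ζ Rs F) = D * (R - Rs - (1 - ζ) * F / ρ) / R := by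
  have hK : 0 < K := by nlinarith [hζ.2]
  have hKR := (denom_lt_of_regime hρ hζ hζF hRsζ).le
  rw [Vsto, if_pos (div_le_etaOpt_mul hρ hF.le hK hKR),
    if_pos (le_div_add_one_sub_etaOpt_mul hρ hK hKR hζF.le)]

lemma le_Vsto (hD : 0 ≤ D) (hR : 0 < R) (hζ : ζ ≤ 1)
    (hv : ¬(η * R < F / ρ ∧ (ζ * η + 1 - η) * R < Rs)) :
    D * (R - Rs - (1 - ζ) * F / ρ) / R ≤ Vsto D ρ ζ R Rs F η := by
  rw [Vsto]
  split_ifs with hcompute hupload hupload'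
  · exact le_rfl
  · gcongr D * ?_ / R
    rw [mul_div_assoc] at hupload ⊢
    linarith
  · gcongr D * ?_ / R
    rw [mul_div_assoc]
    nlinarith [mul_le_mul_of_nonneg_left (not_le.1 hcompute).le (sub_nonneg.2 hζ)]
  · exact absurd ⟨not_le.1 hcompute, not_le.1 hupload'⟩ hv

lemma Tlat_etaOpt_le (hD : 0 ≤ D) (hρ : 0 < ρ) (hζ : ζ ∈ Set.Ioo (0 : ℝ) 1) (hRs : 0 < Rs)
    (hF : 0 < F) (hζF : ζ * F < ρ * Rs) (hRsζ : Rs ≤ ζ * R) (hη : η ∈ Set.Icc (0 : ℝ) 1) :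
    Tlat D ρ ζ R Rs F (etaOpt ρ ζ Rs F) ≤ Tlat D ρ ζ R Rs F η := by
  have hK : 0 < K := by nlinarith [hζ.2]
  have hKR := (denom_lt_of_regime hρ hζ hζF hRsζ).le
  have hs := uploadFrac_pos hζ hη.2
  rw [Tlat_etaOpt hρ hζ hRs hF hζF hRsζ, Tlat]
  split_ifs with hcompute hupload hbalance hupload'
  · exact div_denom_le_uploadTime hD hRs hK hζ.2.le ((div_uploadFrac_le_iff hρ hs).1 hbalance)
  · exact div_denom_le_computeTime hD hρ hF hK
      (not_le.1 (mt (div_uploadFrac_le_iff hρ hs).2 hbalance)).le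
  · exact div_denom_le_computeTime hD hρ hF hK (le_mul_denom_of_lt hρ hη.2 hKR (not_le.1 hupload))
  · exact div_denom_le_uploadTime hD hRs hK hζ.2.le
      (mul_denom_lt_of_lt_div hρ hη.1 hKR (not_le.1 hcompute)).le
  · exact absurd ⟨not_le.1 hcompute, not_le.1 hupload'⟩ (not_case_v hρ hζ hKR hη)

end

/-- If `R ≥ Rs/ζ` and `F/ρ < Rs/ζ`, then `η* = F/(F(1−ζ)+ρRs)` simultaneously
minimizes latency and storage, with `T = Dρ/(F(1−ζ)+ρRs)` and `V = D(R−Rs−(1−ζ)F/ρ)/R`. -/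
theorem eta_opt_case4
    (D ρ ζ : ℝ) (hD : 0 < D) (hρ : 0 < ρ) (hζ : ζ ∈ Set.Ioo (0:ℝ) 1)
    (R Rs F : ℝ) (hR : 0 < R) (hRs : 0 < Rs) (hF : 0 < F)
    (h1 : Rs / ζ ≤ R) (h2 : F / ρ < Rs / ζ) :
    (∀ η ∈ Set.Icc (0:ℝ) 1,
      Tlat D ρ ζ R Rs F (F / (F * (1 - ζ) + ρ * Rs)) ≤ Tlat D ρ ζ R Rs F η ∧
      Vsto D ρ ζ R Rs F (F / (F * (1 - ζ) + ρ * Rs)) ≤ Vsto D ρ ζ R Rs F η) ∧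
    Tlat D ρ ζ R Rs F (F / (F * (1 - ζ) + ρ * Rs)) = D * ρ / (F * (1 - ζ) + ρ * Rs) ∧
    Vsto D ρ ζ R Rs F (F / (F * (1 - ζ) + ρ * Rs)) = D * (R - Rs - (1 - ζ) * F / ρ) / R := by
  have hζF : ζ * F < ρ * Rs := by
    have := (div_lt_div_iff₀ hρ hζ.1).1 h2
    linarith
  have hRsζ : Rs ≤ ζ * R := by
    have := (div_le_iff₀ hζ.1).1 h1
    linarith
  have hKR := (denom_lt_of_regime hρ hζ hζF hRsζ).le
  have hV := Vsto_etaOpt (D := D) hρ hζ hF hζF hRsζ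
  refine ⟨fun η hη => ⟨Tlat_etaOpt_le hD.le hρ hζ hRs hF hζF hRsζ hη, ?_⟩,
    Tlat_etaOpt hρ hζ hRs hF hζF hRsζ, hV⟩
  exact hV.trans_le (le_Vsto hD.le hR hζ.2.le (not_case_v hρ hζ hKR hη))

end
end
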